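/- Let m be a positive integer and c, c' ≥ 0 reals. For each binary string S of length at most m − 1 let p_S ∈ (0, 1], and define χ over binary strings of length at most m recursively by χ_∅ = 1 and χ_{S0} = χ_{S1} = p_S · χ_S. Suppose q_S ≥ 0 is given for each binary string S of length at most m, satisfying q_{S0} + q_{S1} ≤ (1/p_S) · ( q_S + c · H(p_S) ) + c' for every string S of length at most m − 1. Then Σ_{S : |S| = m} χ_S · q_S ≤ q_∅ + c · Σ_{k=0}^{m−1} Σ_{S : |S| = k} H(p_S) + c' · (2^m − 1). -/
import Mathlib

noncomputable def binEnt (p : ℝ) : ℝ :=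
  p * Real.logb 2 (1 / p) + (1 - p) * Real.logb 2 (1 / (1 - p))

lemma binEnt_nonneg {p : ℝ} (h0 : 0 < p) (h1 : p ≤ 1) : 0 ≤ binEnt p := by
  unfold binEnt
  have h1' : 0 ≤ p * Real.logb 2 (1 / p) := by
    apply mul_nonneg h0.le
    apply Real.logb_nonneg one_lt_two
    rw [le_div_iff₀ h0]; linarith
  rcases eq_or_lt_of_le h1 with he | hl
  · simp [he]
  · have : 0 ≤ (1 - p) * Real.logb 2 (1 / (1 - p)) := by
      apply mul_nonneg (by linarith)
      apply Real.logb_nonneg one_lt_two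
      rw [le_div_iff₀ (by linarith)]; linarith
    linarith

lemma ofFn_snoc {k : ℕ} (f : Fin k → Bool) (b : Bool) :
    List.ofFn (Fin.snoc f b) = List.ofFn f ++ [b] := by
  rw [List.ofFn_succ', Fin.snoc_last, List.concat_eq_append]
  simp only [Fin.snoc_castSucc]

/-- **Recursive-decomposition bookkeeping with an additive constant.**
Binary strings are `List Bool`, with children `S ++ [false]` and `S ++ [true]`; `χ` is the
product of the `p`'s along the ancestors, defined recursively by `χ_∅ = 1` and
`χ_{S0} = χ_{S1} = p_S·χ_S`.  If the nonnegative values `q` satisfy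
`q_{S0} + q_{S1} ≤ (1/p_S)·(q_S + c·H(p_S)) + c'` for all strings `S` of length `< m`, then
`Σ_{|S| = m} χ_S·q_S ≤ q_∅ + c·Σ_{k<m} Σ_{|S| = k} H(p_S) + c'·(2^m − 1)`. -/
theorem stmt16 (m : ℕ) (hm : 0 < m) (c c' : ℝ) (hc : 0 ≤ c) (hc' : 0 ≤ c')
    (p χ q : List Bool → ℝ)
    (hp : ∀ S : List Bool, S.length < m → p S ∈ Set.Ioc (0 : ℝ) 1)
    (hχnil : χ [] = 1)
    (hχ : ∀ S : List Bool, S.length < m → ∀ b : Bool, χ (S ++ [b]) = p S * χ S)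
    (hq : ∀ S : List Bool, S.length ≤ m → 0 ≤ q S)
    (hrec : ∀ S : List Bool, S.length < m →
      q (S ++ [false]) + q (S ++ [true]) ≤ (1 / p S) * (q S + c * binEnt (p S)) + c') :
    (∑ S : Fin m → Bool, χ (List.ofFn S) * q (List.ofFn S)) ≤
      q [] + c * (∑ k ∈ Finset.range m, ∑ S : Fin k → Bool, binEnt (p (List.ofFn S))) +
        c' * ((2 : ℝ) ^ m - 1) := by
  -- χ is in (0,1] for strings of length ≤ m
  have hχbd : ∀ S : List Bool, S.length ≤ m → 0 ≤ χ S ∧ χ S ≤ 1 := by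
    intro S
    induction S using List.reverseRecOn with
    | nil => intro _; simp [hχnil]
    | append_singleton T b ih =>
      intro h
      have hT : T.length < m := by simpa using h
      obtain ⟨h0, h1⟩ := hp T hT
      obtain ⟨i0, i1⟩ := ih hT.le
      rw [hχ T hT b]
      constructor
      · exact mul_nonneg h0.le i0
      · calc p T * χ T ≤ 1 * 1 := mul_le_mul h1 i1 i0 zero_le_one
          _ = 1 := by ring
  have key : ∀ k : ℕ, k ≤ m →
      (∑ S : Fin k → Bool, χ (List.ofFn S) * q (List.ofFn S)) ≤
        q [] + c * (∑ j ∈ Finset.range k, ∑ S : Fin j → Bool, binEnt (p (List.ofFn S))) +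
          c' * ((2 : ℝ) ^ k - 1) := by
    intro k
    induction k with
    | zero =>
      intro _
      simp [hχnil]
    | succ k ih =>
      intro hk
      have hkm : k < m := hk
      -- reindex the sum via snoc
      have hsum : (∑ S : Fin (k+1) → Bool, χ (List.ofFn S) * q (List.ofFn S))
          = ∑ f : Fin k → Bool, ∑ b : Bool,
              χ (List.ofFn f ++ [b]) * q (List.ofFn f ++ [b]) := by
        rw [← (Equiv.sum_comp (Fin.snocEquiv (fun _ => Bool))
          (fun S => χ (List.ofFn S) * q (List.ofFn S)))]
        rw [Fintype.sum_prod_type]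
        rw [Finset.sum_comm]
        apply Finset.sum_congr rfl; intro f _
        apply Finset.sum_congr rfl; intro b _
        show χ (List.ofFn (Fin.snoc f b)) * q (List.ofFn (Fin.snoc f b)) = _
        rw [ofFn_snoc]
      rw [hsum]
      have step : ∀ f : Fin k → Bool,
          (∑ b : Bool, χ (List.ofFn f ++ [b]) * q (List.ofFn f ++ [b])) ≤
            χ (List.ofFn f) * q (List.ofFn f) + c * binEnt (p (List.ofFn f)) + c' := by
        intro f
        set S := List.ofFn f with hS
        have hlen : S.length < m := by simp [hS, hkm]
        obtain ⟨h0, h1⟩ := hp S hlen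
        obtain ⟨i0, i1⟩ := hχbd S hlen.le
        have hH := binEnt_nonneg h0 h1
        rw [Fintype.sum_bool, hχ S hlen true, hχ S hlen false]
        have hpne : p S ≠ 0 := ne_of_gt h0
        have h2 : p S * χ S * (q (S ++ [true]) + q (S ++ [false]))
            ≤ p S * χ S * ((1 / p S) * (q S + c * binEnt (p S)) + c') := by
          apply mul_le_mul_of_nonneg_left _ (mul_nonneg h0.le i0)
          have := hrec S hlen
          linarith
        have h3 : p S * χ S * ((1 / p S) * (q S + c * binEnt (p S)) + c')
            = χ S * q S + c * (χ S * binEnt (p S)) + c' * (p S * χ S) := by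
          field_simp
        have h4 : c * (χ S * binEnt (p S)) ≤ c * binEnt (p S) := by
          apply mul_le_mul_of_nonneg_left _ hc
          nlinarith
        have hpχ1 : p S * χ S ≤ 1 := by nlinarith
        have h5 : c' * (p S * χ S) ≤ c' * 1 := mul_le_mul_of_nonneg_left hpχ1 hc'
        nlinarith [h2, h3.le, h3.ge]
      calc (∑ f : Fin k → Bool, ∑ b : Bool,
              χ (List.ofFn f ++ [b]) * q (List.ofFn f ++ [b]))
          ≤ ∑ f : Fin k → Bool,
              (χ (List.ofFn f) * q (List.ofFn f) + c * binEnt (p (List.ofFn f)) + c') :=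
            Finset.sum_le_sum (fun f _ => step f)
        _ = (∑ f : Fin k → Bool, χ (List.ofFn f) * q (List.ofFn f))
              + c * (∑ f : Fin k → Bool, binEnt (p (List.ofFn f))) + c' * 2 ^ k := by
            rw [Finset.sum_add_distrib, Finset.sum_add_distrib, ← Finset.mul_sum,
              Finset.sum_const]
            simp [mul_comm]
        _ ≤ q [] + c * (∑ j ∈ Finset.range (k+1), ∑ S : Fin j → Bool, binEnt (p (List.ofFn S)))
              + c' * ((2:ℝ) ^ (k+1) - 1) := by
            have := ih hkm.le
            rw [Finset.sum_range_succ]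
            ring_nf
            ring_nf at this
            nlinarith [this]
  exact key m le_rfl
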